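/- arXiv:1307.8073 — 5 statements merged into one kernel-verified Lean document; each statement's English description precedes it below -/
import Mathlib

section
/- Suppose that for every Banach space E over 𝕂 a collection A(E) of bounded subsets of E has been assigned such that every singleton {x}, x ∈ E, belongs to A(E), and such that u(A) ∈ A(F) for all Banach spaces E, F, every A ∈ A(E) and every bounded linear operator u : E → F. Then: (i) for all Banach spaces E, F, the topology τ_A of uniform convergence on the sets of A(E) is a linear topology on L(E;F) (it makes L(E;F) a topological vector space); (ii) τ_A is an ideal topology, i.e., for every operator ideal I the assignment (E,F) ↦ (τ_A-closure of I(E;F) in L(E;F)) is again an operator ideal; and (iii) τ_P ⊆ τ_A ⊆ the operator norm topology on each L(E;F). -/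
open Filter Topology Metric Set Pointwise

universe u

variable (𝕜 : Type u) [RCLike 𝕜]

/-- An assignment, to each pair of Banach spaces over `𝕜`, of a set of bounded linear
operators between them. -/
abbrev BanachOpClass (𝕜 : Type u) [RCLike 𝕜] : Type (u + 1) :=
  ∀ (E F : Type u) [NormedAddCommGroup E] [NormedSpace 𝕜 E] [CompleteSpace E]
    [NormedAddCommGroup F] [NormedSpace 𝕜 F] [CompleteSpace F], Set (E →L[𝕜] F)

/-- A bounded linear operator has finite rank if its range is finite dimensional. -/
def IsFiniteRankOp {E F : Type u} [NormedAddCommGroup E] [NormedSpace 𝕜 E]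
    [NormedAddCommGroup F] [NormedSpace 𝕜 F] (u : E →L[𝕜] F) : Prop :=
  FiniteDimensional 𝕜 (LinearMap.range (u : E →ₗ[𝕜] F))

/-- Operator ideals in the sense of Pietsch. -/
structure IsOperatorIdeal (C : BanachOpClass 𝕜) : Prop where
  smul_mem : ∀ (E F : Type u) [NormedAddCommGroup E] [NormedSpace 𝕜 E] [CompleteSpace E]
    [NormedAddCommGroup F] [NormedSpace 𝕜 F] [CompleteSpace F]
    (a : 𝕜) (u : E →L[𝕜] F), u ∈ C E F → a • u ∈ C E F
  add_mem : ∀ (E F : Type u) [NormedAddCommGroup E] [NormedSpace 𝕜 E] [CompleteSpace E]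
    [NormedAddCommGroup F] [NormedSpace 𝕜 F] [CompleteSpace F]
    (u v : E →L[𝕜] F), u ∈ C E F → v ∈ C E F → u + v ∈ C E F
  finiteRank_mem : ∀ (E F : Type u) [NormedAddCommGroup E] [NormedSpace 𝕜 E] [CompleteSpace E]
    [NormedAddCommGroup F] [NormedSpace 𝕜 F] [CompleteSpace F]
    (u : E →L[𝕜] F), IsFiniteRankOp 𝕜 u → u ∈ C E F
  comp_mem : ∀ (E F G H : Type u)
    [NormedAddCommGroup E] [NormedSpace 𝕜 E] [CompleteSpace E]
    [NormedAddCommGroup F] [NormedSpace 𝕜 F] [CompleteSpace F]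
    [NormedAddCommGroup G] [NormedSpace 𝕜 G] [CompleteSpace G]
    [NormedAddCommGroup H] [NormedSpace 𝕜 H] [CompleteSpace H]
    (u : E →L[𝕜] F) (v : F →L[𝕜] G) (w : G →L[𝕜] H),
    v ∈ C F G → w.comp (v.comp u) ∈ C E H

/-- An assignment of a topology to each space of bounded operators between Banach spaces. -/
abbrev OpTopologyAssignment (𝕜 : Type u) [RCLike 𝕜] : Type (u + 1) :=
  ∀ (E F : Type u) [NormedAddCommGroup E] [NormedSpace 𝕜 E] [CompleteSpace E]
    [NormedAddCommGroup F] [NormedSpace 𝕜 F] [CompleteSpace F],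
    TopologicalSpace (E →L[𝕜] F)

/-- The closure of an operator class with respect to an assignment of topologies. -/
def closureClass (τ : OpTopologyAssignment 𝕜) (C : BanachOpClass 𝕜) (E F : Type u)
    [NormedAddCommGroup E] [NormedSpace 𝕜 E] [CompleteSpace E]
    [NormedAddCommGroup F] [NormedSpace 𝕜 F] [CompleteSpace F] : Set (E →L[𝕜] F) :=
  @closure _ (τ E F) (C E F)

/-- An ideal topology: a linear topology on each operator space such that the closure of
any operator ideal is again an operator ideal. -/
structure IsIdealTopology (τ : OpTopologyAssignment 𝕜) : Prop where
  topologicalAddGroup : ∀ (E F : Type u)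
    [NormedAddCommGroup E] [NormedSpace 𝕜 E] [CompleteSpace E]
    [NormedAddCommGroup F] [NormedSpace 𝕜 F] [CompleteSpace F],
    @IsTopologicalAddGroup (E →L[𝕜] F) (τ E F) _
  continuousSMul : ∀ (E F : Type u)
    [NormedAddCommGroup E] [NormedSpace 𝕜 E] [CompleteSpace E]
    [NormedAddCommGroup F] [NormedSpace 𝕜 F] [CompleteSpace F],
    @ContinuousSMul 𝕜 (E →L[𝕜] F) _ _ (τ E F)
  closure_isOperatorIdeal : ∀ C : BanachOpClass 𝕜,
    IsOperatorIdeal 𝕜 C → IsOperatorIdeal 𝕜 (closureClass 𝕜 τ C)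

/-- A Banach space `E` has the `(I, J, τ)`-approximation property if `I(F;E)` is contained in
the `τ`-closure of `J(F;E)` for every Banach space `F`. -/
def HasAP (I J : BanachOpClass 𝕜) (τ : OpTopologyAssignment 𝕜)
    (E : Type u) [NormedAddCommGroup E] [NormedSpace 𝕜 E] [CompleteSpace E] : Prop :=
  ∀ (F : Type u) [NormedAddCommGroup F] [NormedSpace 𝕜 F] [CompleteSpace F],
    I F E ⊆ @closure _ (τ F E) (J F E)

/-- A Banach space `E` has the `(I, J, τ)`-weak approximation property if `I(E;E)` is contained
in the `τ`-closure of `J(E;E)`. -/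
def HasWAP (I J : BanachOpClass 𝕜) (τ : OpTopologyAssignment 𝕜)
    (E : Type u) [NormedAddCommGroup E] [NormedSpace 𝕜 E] [CompleteSpace E] : Prop :=
  I E E ⊆ @closure _ (τ E E) (J E E)

/-- The topology on `E →L[𝕜] F` of uniform convergence on the sets of the family `𝔖`. -/
def uniformOnTop (E F : Type u) [NormedAddCommGroup E] [NormedSpace 𝕜 E] [CompleteSpace E]
    [NormedAddCommGroup F] [NormedSpace 𝕜 F] [CompleteSpace F] (𝔖 : Set (Set E)) :
    TopologicalSpace (E →L[𝕜] F) :=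
  TopologicalSpace.induced (fun u => UniformOnFun.ofFun 𝔖 (⇑u))
    (UniformOnFun.topologicalSpace E F 𝔖)

/-- The operator norm topology on each space of operators. -/
def normTopology (E F : Type u)
    [NormedAddCommGroup E] [NormedSpace 𝕜 E] [CompleteSpace E]
    [NormedAddCommGroup F] [NormedSpace 𝕜 F] [CompleteSpace F] :
    TopologicalSpace (E →L[𝕜] F) := inferInstance

/-- The topology of pointwise convergence (uniform convergence on finite sets; the strong
operator topology). -/
def ptwiseTopology (E F : Type u)
    [NormedAddCommGroup E] [NormedSpace 𝕜 E] [CompleteSpace E]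
    [NormedAddCommGroup F] [NormedSpace 𝕜 F] [CompleteSpace F] :
    TopologicalSpace (E →L[𝕜] F) := uniformOnTop 𝕜 E F {s : Set E | s.Finite}

/-- The compact-open topology: uniform convergence on compact sets. -/
def compactOpenTopology (E F : Type u)
    [NormedAddCommGroup E] [NormedSpace 𝕜 E] [CompleteSpace E]
    [NormedAddCommGroup F] [NormedSpace 𝕜 F] [CompleteSpace F] :
    TopologicalSpace (E →L[𝕜] F) := uniformOnTop 𝕜 E F {K : Set E | IsCompact K}

/-- An assignment of a family of subsets to each Banach space. -/
abbrev SetFamilyAssignment (𝕜 : Type u) [RCLike 𝕜] : Type (u + 1) :=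
  ∀ (E : Type u) [NormedAddCommGroup E] [NormedSpace 𝕜 E] [CompleteSpace E], Set (Set E)

/-- The topology of uniform convergence on the sets of the family `𝒜 E`. -/
def famTopology (𝒜 : SetFamilyAssignment 𝕜) (E F : Type u)
    [NormedAddCommGroup E] [NormedSpace 𝕜 E] [CompleteSpace E]
    [NormedAddCommGroup F] [NormedSpace 𝕜 F] [CompleteSpace F] :
    TopologicalSpace (E →L[𝕜] F) := uniformOnTop 𝕜 E F (𝒜 E)

/-- The class of finite rank bounded operators. -/
def finRankClass (E F : Type u)
    [NormedAddCommGroup E] [NormedSpace 𝕜 E] [CompleteSpace E]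
    [NormedAddCommGroup F] [NormedSpace 𝕜 F] [CompleteSpace F] : Set (E →L[𝕜] F) :=
  {u | IsFiniteRankOp 𝕜 u}

/-- The class of compact operators: those mapping the closed unit ball to a relatively
compact set. -/
def compactClass (E F : Type u)
    [NormedAddCommGroup E] [NormedSpace 𝕜 E] [CompleteSpace E]
    [NormedAddCommGroup F] [NormedSpace 𝕜 F] [CompleteSpace F] : Set (E →L[𝕜] F) :=
  {u | IsCompact (closure (⇑u '' Metric.closedBall 0 1))}

/-- The class of all bounded operators. -/
def boundedClass (E F : Type u)
    [NormedAddCommGroup E] [NormedSpace 𝕜 E] [CompleteSpace E]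
    [NormedAddCommGroup F] [NormedSpace 𝕜 F] [CompleteSpace F] : Set (E →L[𝕜] F) :=
  Set.univ

/-- A witness that `A` is an `I`-bounded subset of `E`: a Banach space `F` and an operator
`u ∈ I(F;E)` with `A ⊆ u(B_F)`. -/
structure IBddWitness (C : BanachOpClass 𝕜) (E : Type u) [NormedAddCommGroup E]
    [NormedSpace 𝕜 E] [CompleteSpace E] (A : Set E) : Type (u + 1) where
  F : Type u
  [iG : NormedAddCommGroup F]
  [iS : NormedSpace 𝕜 F]
  [iC : CompleteSpace F]
  u : F →L[𝕜] E
  hu : u ∈ C F E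
  hA : A ⊆ ⇑u '' Metric.closedBall 0 1

/-- `C_I(E)`: the `I`-bounded subsets of `E`. -/
def IBddSets (C : BanachOpClass 𝕜) (E : Type u) [NormedAddCommGroup E]
    [NormedSpace 𝕜 E] [CompleteSpace E] : Set (Set E) :=
  {A | Nonempty (IBddWitness 𝕜 C E A)}

/-- The topology `τ_{C_I}` of uniform convergence on `I`-bounded sets. -/
def iBddTopology (C : BanachOpClass 𝕜) (E F : Type u)
    [NormedAddCommGroup E] [NormedSpace 𝕜 E] [CompleteSpace E]
    [NormedAddCommGroup F] [NormedSpace 𝕜 F] [CompleteSpace F] :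
    TopologicalSpace (E →L[𝕜] F) := uniformOnTop 𝕜 E F (IBddSets 𝕜 C E)

/-- `L_I`: the class of `I`-bounded operators, i.e. those mapping the closed unit ball
to an `I`-bounded set. -/
def LBddClass (C : BanachOpClass 𝕜) (E F : Type u)
    [NormedAddCommGroup E] [NormedSpace 𝕜 E] [CompleteSpace E]
    [NormedAddCommGroup F] [NormedSpace 𝕜 F] [CompleteSpace F] : Set (E →L[𝕜] F) :=
  {T | ⇑T '' Metric.closedBall 0 1 ∈ IBddSets 𝕜 C F}

/-- A witness that `B` is an `I`-compact subset of `E`. -/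
structure ICptWitness (C : BanachOpClass 𝕜) (E : Type u) [NormedAddCommGroup E]
    [NormedSpace 𝕜 E] [CompleteSpace E] (B : Set E) : Type (u + 1) where
  F : Type u
  [iG : NormedAddCommGroup F]
  [iS : NormedSpace 𝕜 F]
  [iC : CompleteSpace F]
  K : Set F
  hK : IsCompact K
  u : F →L[𝕜] E
  hu : u ∈ C F E
  A : Set E
  hA : A ⊆ ⇑u '' K
  hB : B = closure A

/-- `K_I(E)`: the `I`-compact subsets of `E`. -/
def ICptSets (C : BanachOpClass 𝕜) (E : Type u) [NormedAddCommGroup E]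
    [NormedSpace 𝕜 E] [CompleteSpace E] : Set (Set E) :=
  {B | Nonempty (ICptWitness 𝕜 C E B)}

/-- The topology `τ_{K_I}` of uniform convergence on `I`-compact sets. -/
def iCptTopology (C : BanachOpClass 𝕜) (E F : Type u)
    [NormedAddCommGroup E] [NormedSpace 𝕜 E] [CompleteSpace E]
    [NormedAddCommGroup F] [NormedSpace 𝕜 F] [CompleteSpace F] :
    TopologicalSpace (E →L[𝕜] F) := uniformOnTop 𝕜 E F (ICptSets 𝕜 C E)

/-- The absolutely convex hull of the terms of a sequence: all finite sums `Σ λᵢ • x_{nᵢ}`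
with `Σ ‖λᵢ‖ ≤ 1`. -/
def absConvexHullSeq {E : Type u} [NormedAddCommGroup E] [NormedSpace 𝕜 E]
    (x : ℕ → E) : Set E :=
  {y | ∃ (m : ℕ) (lam : Fin m → 𝕜) (idx : Fin m → ℕ),
    (∑ i, ‖lam i‖) ≤ 1 ∧ y = ∑ i, lam i • x (idx i)}

/-- `BR_q(E)`: the Bourgain–Reinov `q`-compact subsets of `E`. -/
def BRSets (q : ℝ) (E : Type u) [NormedAddCommGroup E] [NormedSpace 𝕜 E]
    [CompleteSpace E] : Set (Set E) :=
  {A | ∃ x : ℕ → E, Summable (fun n => ‖x n‖ ^ q) ∧ A ⊆ closure (absConvexHullSeq 𝕜 x)}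

/-- The topology `τ_{BR_q}` of uniform convergence on Bourgain–Reinov `q`-compact sets. -/
def brTopology (q : ℝ) (E F : Type u)
    [NormedAddCommGroup E] [NormedSpace 𝕜 E] [CompleteSpace E]
    [NormedAddCommGroup F] [NormedSpace 𝕜 F] [CompleteSpace F] :
    TopologicalSpace (E →L[𝕜] F) := uniformOnTop 𝕜 E F (BRSets 𝕜 q E)

/-- The Grothendieck property of an operator ideal. -/
def GrothendieckProperty (C : BanachOpClass 𝕜) : Prop :=
  ∀ (E : Type u) [NormedAddCommGroup E] [NormedSpace 𝕜 E] [CompleteSpace E] (A : Set E),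
    Bornology.IsBounded A →
    (∀ ε : ℝ, 0 < ε → ∃ Aε ∈ IBddSets 𝕜 C E, A ⊆ Aε + Metric.closedBall (0 : E) ε) →
    A ∈ IBddSets 𝕜 C E

/-- A witness that `T` factors as `T = R ∘ S` with `S` in the class `D` and `R` in the
class `C`, through some Banach space `Z`. -/
structure FactorWitness (D C : BanachOpClass 𝕜) (F E : Type u)
    [NormedAddCommGroup F] [NormedSpace 𝕜 F] [CompleteSpace F]
    [NormedAddCommGroup E] [NormedSpace 𝕜 E] [CompleteSpace E]
    (T : F →L[𝕜] E) : Type (u + 1) where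
  Z : Type u
  [iG : NormedAddCommGroup Z]
  [iS : NormedSpace 𝕜 Z]
  [iC : CompleteSpace Z]
  S : F →L[𝕜] Z
  R : Z →L[𝕜] E
  hS : S ∈ D F Z
  hR : R ∈ C Z E
  heq : T = R.comp S

/-!
Via `UniformConvergenceCLM`, `τ_𝒜` is Mathlib's topology of uniform convergence on `𝒜 E`: a
group topology for any family, with continuous scalar multiplication as soon as the sets are
bounded. Stability of `𝒜` under images makes `v ↦ w ∘ v ∘ u` continuous, and the closure of an
ideal is an ideal for any linear topology with that property. The comparison with the norm
topology is monotonicity in the family, and with `τ_P` it holds because a finite set is covered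
by finitely many singletons.
-/

section UniformOnTop

variable {𝕜 : Type u} [RCLike 𝕜] {E F G H : Type u}
  [NormedAddCommGroup E] [NormedSpace 𝕜 E] [CompleteSpace E]
  [NormedAddCommGroup F] [NormedSpace 𝕜 F] [CompleteSpace F]
  [NormedAddCommGroup G] [NormedSpace 𝕜 G] [CompleteSpace G]
  [NormedAddCommGroup H] [NormedSpace 𝕜 H] [CompleteSpace H]

lemma uniformOnTop_eq_uniformConvergenceCLM (𝔖 : Set (Set E)) :
    uniformOnTop 𝕜 E F 𝔖 = UniformConvergenceCLM.instTopologicalSpace (RingHom.id 𝕜) F 𝔖 :=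
  (UniformConvergenceCLM.topologicalSpace_eq _ _ _).symm

lemma isTopologicalAddGroup_uniformOnTop (𝔖 : Set (Set E)) :
    @IsTopologicalAddGroup (E →L[𝕜] F) (uniformOnTop 𝕜 E F 𝔖) _ := by
  rw [uniformOnTop_eq_uniformConvergenceCLM]
  exact UniformConvergenceCLM.instIsTopologicalAddGroup _ F 𝔖

lemma continuousSMul_uniformOnTop {𝔖 : Set (Set E)}
    (h𝔖 : ∀ S ∈ 𝔖, Bornology.IsBounded S) :
    @ContinuousSMul 𝕜 (E →L[𝕜] F) _ _ (uniformOnTop 𝕜 E F 𝔖) := by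
  rw [uniformOnTop_eq_uniformConvergenceCLM]
  exact UniformConvergenceCLM.continuousSMul _ F 𝔖
    fun S hS => (NormedSpace.isVonNBounded_iff 𝕜).2 (h𝔖 S hS)

lemma normTopology_le_uniformOnTop {𝔖 : Set (Set E)}
    (h𝔖 : ∀ S ∈ 𝔖, Bornology.IsBounded S) :
    normTopology 𝕜 E F ≤ uniformOnTop 𝕜 E F 𝔖 := by
  rw [uniformOnTop_eq_uniformConvergenceCLM]
  exact UniformConvergenceCLM.topologicalSpace_mono _ F
    fun S hS => (NormedSpace.isVonNBounded_iff 𝕜).2 (h𝔖 S hS)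

lemma uniformOnTop_le_ptwiseTopology {𝔖 : Set (Set E)} (h𝔖 : ∀ x : E, {x} ∈ 𝔖) :
    uniformOnTop 𝕜 E F 𝔖 ≤ ptwiseTopology 𝕜 E F := by
  refine induced_mono (UniformSpace.toTopologicalSpace_mono ?_)
  refine UniformOnFun.uniformContinuous_ofFun_toFun F {s : Set E | s.Finite} 𝔖 fun s hs =>
    ⟨(fun x => {x}) '' s, ?_, hs.image _, fun x hx => ⟨{x}, mem_image_of_mem _ hx, rfl⟩⟩
  rintro _ ⟨x, -, rfl⟩
  exact h𝔖 x

lemma continuous_comp_comp_uniformOnTop {𝔖E : Set (Set E)} {𝔖F : Set (Set F)}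
    (u : E →L[𝕜] F) (w : G →L[𝕜] H) (hu : ∀ A ∈ 𝔖E, ⇑u '' A ∈ 𝔖F) :
    Continuous[uniformOnTop 𝕜 F G 𝔖F, uniformOnTop 𝕜 E H 𝔖E]
      fun v : F →L[𝕜] G => w.comp (v.comp u) := by
  let := uniformOnTop 𝕜 F G 𝔖F
  refine continuous_induced_rng.mpr ?_
  have hpre := UniformOnFun.precomp_uniformContinuous (β := G) hu
  have hpost := UniformOnFun.postcomp_uniformContinuous (𝔖 := 𝔖E) w.uniformContinuous
  exact (hpost.continuous.comp hpre.continuous).comp continuous_induced_dom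

end UniformOnTop

lemma closureClass_isOperatorIdeal {𝕜 : Type u} [RCLike 𝕜] (τ : OpTopologyAssignment 𝕜)
    (hadd : ∀ (E F : Type u) [NormedAddCommGroup E] [NormedSpace 𝕜 E] [CompleteSpace E]
      [NormedAddCommGroup F] [NormedSpace 𝕜 F] [CompleteSpace F],
      @ContinuousAdd (E →L[𝕜] F) (τ E F) _)
    (hsmul : ∀ (E F : Type u) [NormedAddCommGroup E] [NormedSpace 𝕜 E] [CompleteSpace E]
      [NormedAddCommGroup F] [NormedSpace 𝕜 F] [CompleteSpace F],
      @ContinuousConstSMul 𝕜 (E →L[𝕜] F) (τ E F) _)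
    (hcomp : ∀ (E F G H : Type u)
      [NormedAddCommGroup E] [NormedSpace 𝕜 E] [CompleteSpace E]
      [NormedAddCommGroup F] [NormedSpace 𝕜 F] [CompleteSpace F]
      [NormedAddCommGroup G] [NormedSpace 𝕜 G] [CompleteSpace G]
      [NormedAddCommGroup H] [NormedSpace 𝕜 H] [CompleteSpace H]
      (u : E →L[𝕜] F) (w : G →L[𝕜] H),
      Continuous[τ F G, τ E H] fun v : F →L[𝕜] G => w.comp (v.comp u))
    {C : BanachOpClass 𝕜} (hC : IsOperatorIdeal 𝕜 C) :
    IsOperatorIdeal 𝕜 (closureClass 𝕜 τ C) where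
  smul_mem E F _ _ _ _ _ _ a _ hv :=
    letI := τ E F
    haveI := hsmul E F
    map_mem_closure (continuous_const_smul a) hv fun x hx => hC.smul_mem E F a x hx
  add_mem E F _ _ _ _ _ _ _ _ hv hw :=
    letI := τ E F
    haveI := hadd E F
    map_mem_closure₂ continuous_add hv hw fun x hx y hy => hC.add_mem E F x y hx hy
  finiteRank_mem E F _ _ _ _ _ _ v hv :=
    letI := τ E F
    subset_closure (hC.finiteRank_mem E F v hv)
  comp_mem E F G H _ _ _ _ _ _ _ _ _ _ _ _ u _ w hv :=
    letI := τ F G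
    letI := τ E H
    map_mem_closure (f := fun v : F →L[𝕜] G => w.comp (v.comp u)) (hcomp E F G H u w) hv
      fun x hx => hC.comp_mem E F G H u x w hx

/-- the topology of uniform convergence on a suitable family of bounded sets is
an ideal topology lying between the topology of pointwise convergence and the norm topology. -/
theorem statement0 (𝒜 : SetFamilyAssignment 𝕜)
    (hbdd : ∀ (E : Type u) [NormedAddCommGroup E] [NormedSpace 𝕜 E] [CompleteSpace E], ∀ A ∈ 𝒜 E, Bornology.IsBounded A)
    (hsing : ∀ (E : Type u) [NormedAddCommGroup E] [NormedSpace 𝕜 E] [CompleteSpace E] (x : E), {x} ∈ 𝒜 E)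
    (himg : ∀ (E F : Type u) [NormedAddCommGroup E] [NormedSpace 𝕜 E] [CompleteSpace E] [NormedAddCommGroup F] [NormedSpace 𝕜 F] [CompleteSpace F] (u : E →L[𝕜] F),
      ∀ A ∈ 𝒜 E, ⇑u '' A ∈ 𝒜 F) :
    -- (i) τ_𝒜 is a linear topology on each L(E;F)
    (∀ (E F : Type u) [NormedAddCommGroup E] [NormedSpace 𝕜 E] [CompleteSpace E] [NormedAddCommGroup F] [NormedSpace 𝕜 F] [CompleteSpace F],
      @IsTopologicalAddGroup (E →L[𝕜] F) (famTopology 𝕜 𝒜 E F) _ ∧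
      @ContinuousSMul 𝕜 (E →L[𝕜] F) _ _ (famTopology 𝕜 𝒜 E F)) ∧
    -- (ii) τ_𝒜 is an ideal topology
    (∀ C : BanachOpClass 𝕜, IsOperatorIdeal 𝕜 C →
      IsOperatorIdeal 𝕜 (closureClass 𝕜 (famTopology 𝕜 𝒜) C)) ∧
    -- (iii) τ_P ⊆ τ_𝒜 ⊆ ‖·‖ (recall: in Mathlib, finer topologies are smaller)
    (∀ (E F : Type u) [NormedAddCommGroup E] [NormedSpace 𝕜 E] [CompleteSpace E] [NormedAddCommGroup F] [NormedSpace 𝕜 F] [CompleteSpace F],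
      normTopology 𝕜 E F ≤ famTopology 𝕜 𝒜 E F ∧
      famTopology 𝕜 𝒜 E F ≤ ptwiseTopology 𝕜 E F) := by
  have linear : ∀ (E F : Type u) [NormedAddCommGroup E] [NormedSpace 𝕜 E] [CompleteSpace E]
      [NormedAddCommGroup F] [NormedSpace 𝕜 F] [CompleteSpace F],
      @IsTopologicalAddGroup (E →L[𝕜] F) (famTopology 𝕜 𝒜 E F) _ ∧
      @ContinuousSMul 𝕜 (E →L[𝕜] F) _ _ (famTopology 𝕜 𝒜 E F) := fun E F _ _ _ _ _ _ =>
    ⟨isTopologicalAddGroup_uniformOnTop _, continuousSMul_uniformOnTop (hbdd E)⟩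
  refine ⟨linear, fun C hC => ?_, fun E F _ _ _ _ _ _ =>
    ⟨normTopology_le_uniformOnTop (hbdd E), uniformOnTop_le_ptwiseTopology (hsing E)⟩⟩
  refine closureClass_isOperatorIdeal _ (fun E F _ _ _ _ _ _ => ?_) (fun E F _ _ _ _ _ _ => ?_)
    (fun E F G H _ _ _ _ _ _ _ _ _ _ _ _ u w => ?_) hC
  · exact @IsTopologicalAddGroup.toContinuousAdd _ (famTopology 𝕜 𝒜 E F) _ (linear E F).1
  · exact @ContinuousSMul.continuousConstSMul _ _ _ (famTopology 𝕜 𝒜 E F) _ (linear E F).2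
  · exact continuous_comp_comp_uniformOnTop u w (himg E F u)
end

section
/- Let I, J be operator ideals and τ be an ideal topology. If the Banach space E has the (I, J, τ)-approximation property and the Banach space F is isomorphic to a complemented subspace of E (i.e., there exist bounded linear operators u : F → E and v : E → F with v ∘ u = id_F), then F has the (I, J, τ)-approximation property as well. The same holds with the (I, J, τ)-weak approximation property in place of the (I, J, τ)-approximation property. -/
open Filter Topology Metric Set Pointwise

universe u

variable (𝕜 : Type u) [RCLike 𝕜]

section Retraction

variable {𝕜}

theorem IsOperatorIdeal.comp_left_mem {C : BanachOpClass 𝕜} (hC : IsOperatorIdeal 𝕜 C)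
    {F G H : Type u} [NormedAddCommGroup F] [NormedSpace 𝕜 F] [CompleteSpace F]
    [NormedAddCommGroup G] [NormedSpace 𝕜 G] [CompleteSpace G]
    [NormedAddCommGroup H] [NormedSpace 𝕜 H] [CompleteSpace H]
    {v : F →L[𝕜] G} (w : G →L[𝕜] H) (hv : v ∈ C F G) : w.comp v ∈ C F H :=
  hC.comp_mem F F G H (ContinuousLinearMap.id 𝕜 F) v w hv

theorem ContinuousLinearMap.comp_comp_of_comp_eq_id {E F G : Type u}
    [NormedAddCommGroup E] [NormedSpace 𝕜 E] [NormedAddCommGroup F] [NormedSpace 𝕜 F]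
    [NormedAddCommGroup G] [NormedSpace 𝕜 G]
    {u : F →L[𝕜] E} {v : E →L[𝕜] F} (huv : v.comp u = ContinuousLinearMap.id 𝕜 F)
    (T : G →L[𝕜] F) : v.comp (u.comp T) = T := by
  rw [← ContinuousLinearMap.comp_assoc, huv, ContinuousLinearMap.id_comp]

variable {I J : BanachOpClass 𝕜} {τ : OpTopologyAssignment 𝕜}
  {E F : Type u} [NormedAddCommGroup E] [NormedSpace 𝕜 E] [CompleteSpace E] [NormedAddCommGroup F] [NormedSpace 𝕜 F] [CompleteSpace F]
  {u : F →L[𝕜] E} {v : E →L[𝕜] F}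

theorem HasAP.of_comp_eq_id (hI : IsOperatorIdeal 𝕜 I) (hJ : IsOperatorIdeal 𝕜 J)
    (hτ : IsIdealTopology 𝕜 τ) (huv : v.comp u = ContinuousLinearMap.id 𝕜 F)
    (hE : HasAP 𝕜 I J τ E) : HasAP 𝕜 I J τ F := by
  intro G _ _ _ T hT
  have huT : u.comp T ∈ closureClass 𝕜 τ J G E := hE G (hI.comp_left_mem u hT)
  have hvuT := (hτ.closure_isOperatorIdeal J hJ).comp_left_mem v huT
  rwa [ContinuousLinearMap.comp_comp_of_comp_eq_id huv] at hvuT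

theorem HasWAP.of_comp_eq_id (hI : IsOperatorIdeal 𝕜 I) (hJ : IsOperatorIdeal 𝕜 J)
    (hτ : IsIdealTopology 𝕜 τ) (huv : v.comp u = ContinuousLinearMap.id 𝕜 F)
    (hE : HasWAP 𝕜 I J τ E) : HasWAP 𝕜 I J τ F := by
  intro T hT
  -- `u T v` is an `I`-operator on `E`, and `T = v (u T v) u`.
  have huTv : u.comp (T.comp v) ∈ closureClass 𝕜 τ J E E := hE (hI.comp_mem E F F E v T u hT)
  have hT' := (hτ.closure_isOperatorIdeal J hJ).comp_mem F E E F u _ v huTv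
  simp only [ContinuousLinearMap.comp_assoc] at hT'
  rwa [ContinuousLinearMap.comp_comp_of_comp_eq_id huv, huv, ContinuousLinearMap.comp_id] at hT'

end Retraction

/-- the (I, J, τ)-AP and (I, J, τ)-WAP pass to complemented subspaces. -/
theorem statement4 (I J : BanachOpClass 𝕜)
    (hI : IsOperatorIdeal 𝕜 I) (hJ : IsOperatorIdeal 𝕜 J)
    (τ : OpTopologyAssignment 𝕜) (hτ : IsIdealTopology 𝕜 τ)
    (E F : Type u) [NormedAddCommGroup E] [NormedSpace 𝕜 E] [CompleteSpace E] [NormedAddCommGroup F] [NormedSpace 𝕜 F] [CompleteSpace F]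
    (u : F →L[𝕜] E) (v : E →L[𝕜] F) (huv : v.comp u = ContinuousLinearMap.id 𝕜 F) :
    (HasAP 𝕜 I J τ E → HasAP 𝕜 I J τ F) ∧
    (HasWAP 𝕜 I J τ E → HasWAP 𝕜 I J τ F) :=
  ⟨HasAP.of_comp_eq_id hI hJ hτ huv, HasWAP.of_comp_eq_id hI hJ hτ huv⟩
end

section
/- Let E be a Banach space and let I_1, I_2, I_3, J_1, J_2 be operator ideals such that J_2 ⊆ J_1, I_1 ⊆ I_3, and every operator in I_1(F;G) can be written as R ∘ S with S ∈ L_{J_2}(F;H) and R ∈ I_1(H;G) for some Banach space H (i.e., I_1 ⊆ I_1 ∘ L_{J_2}). Consider the conditions: (a) id_E belongs to the τ_{C_{J_1}}-closure of I_2(E;E); (b) E has the (I_1, I_2, ‖·‖)-AP; (c) E has the (I_1, I_2, τ_{C_{J_2}})-AP; (d) E has the (I_3, I_2, τ_{C_{J_2}})-AP; (e) E has the (L, I_2, τ_{C_{J_2}})-AP, where L is the ideal of all bounded operators. Then (a) ⟹ (e) ⟹ (d) ⟹ (c) ⟺ (b). -/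
open Filter Topology Metric Set Pointwise

universe u

variable (𝕜 : Type u) [RCLike 𝕜]

/-!
For `T : F → E` and a `J₂`-bounded set `A`, the image `T(A)` is `J₂`-, hence `J₁`-bounded; so an
operator `v ∈ I₂(E;E)` close to `id_E` on `T(A)` gives `v ∘ T ∈ I₂(F;E)` close to `T` on `A`,
which is (a) ⟹ (e). Factoring `T ∈ I₁(F;E)` as `R ∘ S` with `S(B_F)` a `J₂`-bounded set, an
operator `u ∈ I₂` close to `R` uniformly on `S(B_F)` makes `‖T - u ∘ S‖` small: this is
(c) ⟹ (b). Conversely `J₂`-bounded sets are bounded, so norm convergence implies `τ_{C_{J₂}}`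
convergence, and the remaining implications only shrink the class of operators to approximate.
-/

variable {𝕜}

namespace IsOperatorIdeal

variable {C : BanachOpClass 𝕜} {E F G : Type u}
  [NormedAddCommGroup E] [NormedSpace 𝕜 E] [CompleteSpace E]
  [NormedAddCommGroup F] [NormedSpace 𝕜 F] [CompleteSpace F]
  [NormedAddCommGroup G] [NormedSpace 𝕜 G] [CompleteSpace G]

theorem zero_mem (hC : IsOperatorIdeal 𝕜 C) : (0 : E →L[𝕜] F) ∈ C E F := by
  apply hC.finiteRank_mem
  rw [IsFiniteRankOp, ContinuousLinearMap.toLinearMap_zero, LinearMap.range_zero]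
  infer_instance

theorem comp_mem_left (hC : IsOperatorIdeal 𝕜 C) {v : E →L[𝕜] F} (hv : v ∈ C E F)
    (w : F →L[𝕜] G) : w.comp v ∈ C E G := by
  simpa using hC.comp_mem E E F G (.id 𝕜 E) v w hv

theorem comp_mem_right (hC : IsOperatorIdeal 𝕜 C) {v : F →L[𝕜] G} (hv : v ∈ C F G)
    (u : E →L[𝕜] F) : v.comp u ∈ C E G := by
  simpa using hC.comp_mem E F G G u v (.id 𝕜 G) hv

theorem iBddSets_nonempty (hC : IsOperatorIdeal 𝕜 C) : (IBddSets 𝕜 C E).Nonempty :=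
  ⟨∅, ⟨⟨E, 0, hC.zero_mem, empty_subset _⟩⟩⟩

/-- `u(B_F) ∪ v(B_G)` lies in the image of the unit ball of `F × G` under `(x, y) ↦ u x + v y`. -/
theorem iBddSets_directedOn (hC : IsOperatorIdeal 𝕜 C) : DirectedOn (· ⊆ ·) (IBddSets 𝕜 C E) := by
  rintro A ⟨⟨F, u, hu, hA⟩⟩ B ⟨⟨G, v, hv, hB⟩⟩
  have huv : u.comp (.fst 𝕜 F G) + v.comp (.snd 𝕜 F G) ∈ C (F × G) E :=
    hC.add_mem _ _ _ _ (hC.comp_mem_right hu _) (hC.comp_mem_right hv _)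
  refine ⟨A ∪ B, ⟨⟨F × G, _, huv, ?_⟩⟩, subset_union_left, subset_union_right⟩
  rintro _ (hx | hx)
  · obtain ⟨f, hf, rfl⟩ := hA hx
    exact ⟨(f, 0), by simpa [Prod.norm_def] using hf, by simp⟩
  · obtain ⟨g, hg, rfl⟩ := hB hx
    exact ⟨(0, g), by simpa [Prod.norm_def] using hg, by simp⟩

theorem image_mem_iBddSets (hC : IsOperatorIdeal 𝕜 C) {A : Set E} (hA : A ∈ IBddSets 𝕜 C E)
    (T : E →L[𝕜] F) : T '' A ∈ IBddSets 𝕜 C F := by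
  obtain ⟨⟨G, w, hw, hAw⟩⟩ := hA
  refine ⟨⟨G, T.comp w, hC.comp_mem_left hw T, ?_⟩⟩
  rw [ContinuousLinearMap.coe_comp, image_comp]
  exact image_mono hAw

end IsOperatorIdeal

section IBddSets

variable {E : Type u} [NormedAddCommGroup E] [NormedSpace 𝕜 E] [CompleteSpace E]

theorem isBounded_of_mem_iBddSets {C : BanachOpClass 𝕜} {A : Set E}
    (hA : A ∈ IBddSets 𝕜 C E) : Bornology.IsBounded A := by
  obtain ⟨⟨F, w, -, hAw⟩⟩ := hA
  exact (w.lipschitz.isBounded_image isBounded_closedBall).subset hAw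

theorem iBddSets_mono {C D : BanachOpClass 𝕜}
    (hCD : ∀ (E F : Type u) [NormedAddCommGroup E] [NormedSpace 𝕜 E] [CompleteSpace E]
      [NormedAddCommGroup F] [NormedSpace 𝕜 F] [CompleteSpace F], C E F ⊆ D E F) :
    IBddSets 𝕜 C E ⊆ IBddSets 𝕜 D E := by
  rintro A ⟨⟨F, w, hw, hAw⟩⟩
  exact ⟨⟨F, w, hCD F E hw, hAw⟩⟩

end IBddSets

section Closure

variable {E F : Type u}
  [NormedAddCommGroup E] [NormedSpace 𝕜 E] [CompleteSpace E]
  [NormedAddCommGroup F] [NormedSpace 𝕜 F] [CompleteSpace F]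

theorem mem_closure_uniformOnTop_iff {𝔖 : Set (Set E)} (hne : 𝔖.Nonempty)
    (hdir : DirectedOn (· ⊆ ·) 𝔖) {s : Set (E →L[𝕜] F)} {T : E →L[𝕜] F} :
    T ∈ @closure _ (uniformOnTop 𝕜 E F 𝔖) s ↔
      ∀ A ∈ 𝔖, ∀ ε > 0, ∃ u ∈ s, ∀ x ∈ A, dist (u x) (T x) < ε := by
  let _ : TopologicalSpace (E →L[𝕜] F) := uniformOnTop 𝕜 E F 𝔖
  have hbasis : (𝓝 T).HasBasis (fun Aε : Set E × ℝ => Aε.1 ∈ 𝔖 ∧ 0 < Aε.2)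
      (fun Aε => {u | ∀ x ∈ Aε.1, dist (u x) (T x) < Aε.2}) := by
    rw [show 𝓝 T = comap (fun u : E →L[𝕜] F => UniformOnFun.ofFun 𝔖 ⇑u) _ from
      nhds_induced _ _]
    refine ((UniformOnFun.hasBasis_nhds_of_basis E F 𝔖 _ hne hdir
      Metric.uniformity_basis_dist).comap _).congr (fun _ => Iff.rfl) ?_
    rintro ⟨A, ε⟩ -
    ext u
    simp [UniformOnFun.gen]
  rw [mem_closure_iff_nhds_basis hbasis]
  exact ⟨fun h A hA ε hε => h (A, ε) ⟨hA, hε⟩, fun h ⟨A, ε⟩ ⟨hA, hε⟩ => h A hA ε hε⟩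

theorem IsOperatorIdeal.mem_closure_iBddTopology_iff {C : BanachOpClass 𝕜}
    (hC : IsOperatorIdeal 𝕜 C) {s : Set (E →L[𝕜] F)} {T : E →L[𝕜] F} :
    T ∈ @closure _ (iBddTopology 𝕜 C E F) s ↔
      ∀ A ∈ IBddSets 𝕜 C E, ∀ ε > 0, ∃ u ∈ s, ∀ x ∈ A, dist (u x) (T x) < ε :=
  mem_closure_uniformOnTop_iff hC.iBddSets_nonempty hC.iBddSets_directedOn

end Closure

section ApproximationProperty

variable {E : Type u} [NormedAddCommGroup E] [NormedSpace 𝕜 E] [CompleteSpace E]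

theorem HasAP.mono_left {I I' J : BanachOpClass 𝕜} {τ : OpTopologyAssignment 𝕜}
    (hII' : ∀ (F : Type u) [NormedAddCommGroup F] [NormedSpace 𝕜 F] [CompleteSpace F],
      I F E ⊆ I' F E)
    (h : HasAP 𝕜 I' J τ E) : HasAP 𝕜 I J τ E :=
  fun F _ _ _ => (hII' F).trans (h F)

theorem hasAP_boundedClass_of_id_mem_closure {I J₁ J₂ : BanachOpClass 𝕜}
    (hI : IsOperatorIdeal 𝕜 I) (hJ₁ : IsOperatorIdeal 𝕜 J₁) (hJ₂ : IsOperatorIdeal 𝕜 J₂)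
    (hJ₂₁ : ∀ (E F : Type u) [NormedAddCommGroup E] [NormedSpace 𝕜 E] [CompleteSpace E]
      [NormedAddCommGroup F] [NormedSpace 𝕜 F] [CompleteSpace F], J₂ E F ⊆ J₁ E F)
    (hid : ContinuousLinearMap.id 𝕜 E ∈ @closure _ (iBddTopology 𝕜 J₁ E E) (I E E)) :
    HasAP 𝕜 (boundedClass 𝕜) I (iBddTopology 𝕜 J₂) E := by
  intro F _ _ _ T _
  rw [hJ₂.mem_closure_iBddTopology_iff]
  intro A hA ε hε
  have hTA : T '' A ∈ IBddSets 𝕜 J₁ E := iBddSets_mono hJ₂₁ (hJ₂.image_mem_iBddSets hA T)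
  obtain ⟨v, hv, hvT⟩ := hJ₁.mem_closure_iBddTopology_iff.mp hid _ hTA ε hε
  exact ⟨v.comp T, hI.comp_mem_right hv T, fun x hx => hvT (T x) (mem_image_of_mem T hx)⟩

theorem hasAP_normTopology_of_hasAP_iBddTopology {I₁ I₂ J : BanachOpClass 𝕜}
    (hI₂ : IsOperatorIdeal 𝕜 I₂) (hJ : IsOperatorIdeal 𝕜 J)
    (hfact : ∀ (F G : Type u) [NormedAddCommGroup F] [NormedSpace 𝕜 F] [CompleteSpace F]
      [NormedAddCommGroup G] [NormedSpace 𝕜 G] [CompleteSpace G], ∀ T ∈ I₁ F G,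
      Nonempty (FactorWitness 𝕜 (LBddClass 𝕜 J) I₁ F G T))
    (h : HasAP 𝕜 I₁ I₂ (iBddTopology 𝕜 J) E) : HasAP 𝕜 I₁ I₂ (normTopology 𝕜) E := by
  intro F _ _ _ T hT
  change T ∈ closure (I₂ F E)
  rw [Metric.mem_closure_iff]
  intro ε hε
  obtain ⟨⟨Z, S, R, hS, hR, rfl⟩⟩ := hfact F E T hT
  obtain ⟨u, hu, huR⟩ :=
    hJ.mem_closure_iBddTopology_iff.mp (h Z hR) _ hS (ε / 2) (half_pos hε)
  have hnorm : ‖R.comp S - u.comp S‖ ≤ ε / 2 := by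
    refine ContinuousLinearMap.opNorm_le_of_unit_norm (half_pos hε).le fun x hx => ?_
    have hSx := huR (S x) (mem_image_of_mem S (by simp [hx]))
    rw [dist_eq_norm'] at hSx
    simpa using hSx.le
  refine ⟨u.comp S, hI₂.comp_mem_right hu S, ?_⟩
  rw [dist_eq_norm]
  linarith

theorem hasAP_iBddTopology_of_hasAP_normTopology {I₁ I₂ J : BanachOpClass 𝕜}
    (hJ : IsOperatorIdeal 𝕜 J) (h : HasAP 𝕜 I₁ I₂ (normTopology 𝕜) E) :
    HasAP 𝕜 I₁ I₂ (iBddTopology 𝕜 J) E := by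
  intro F _ _ _ T hT
  rw [hJ.mem_closure_iBddTopology_iff]
  intro A hA ε hε
  obtain ⟨M, hM, hAM⟩ := (isBounded_of_mem_iBddSets hA).exists_pos_norm_le
  have hTc : T ∈ closure (I₂ F E) := h F hT
  obtain ⟨u, hu, huT⟩ := Metric.mem_closure_iff.mp hTc (ε / M) (div_pos hε hM)
  refine ⟨u, hu, fun x hx => ?_⟩
  calc dist (u x) (T x) = ‖(T - u) x‖ := by rw [dist_eq_norm']; rfl
    _ ≤ ‖T - u‖ * ‖x‖ := (T - u).le_opNorm x
    _ ≤ ‖T - u‖ * M := by gcongr; exact hAM x hx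
    _ < ε / M * M := by gcongr; rwa [← dist_eq_norm]
    _ = ε := div_mul_cancel₀ ε hM.ne'

end ApproximationProperty

theorem statement8_general (I₁ I₂ I₃ J₁ J₂ : BanachOpClass 𝕜)
    (hI₂ : IsOperatorIdeal 𝕜 I₂)
    (hJ₁ : IsOperatorIdeal 𝕜 J₁) (hJ₂ : IsOperatorIdeal 𝕜 J₂)
    (hJ21 : ∀ (E F : Type u) [NormedAddCommGroup E] [NormedSpace 𝕜 E] [CompleteSpace E] [NormedAddCommGroup F] [NormedSpace 𝕜 F] [CompleteSpace F], J₂ E F ⊆ J₁ E F)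
    (hI13 : ∀ (E F : Type u) [NormedAddCommGroup E] [NormedSpace 𝕜 E] [CompleteSpace E] [NormedAddCommGroup F] [NormedSpace 𝕜 F] [CompleteSpace F], I₁ E F ⊆ I₃ E F)
    (hfact : ∀ (F G : Type u) [NormedAddCommGroup F] [NormedSpace 𝕜 F] [CompleteSpace F] [NormedAddCommGroup G] [NormedSpace 𝕜 G] [CompleteSpace G], ∀ T ∈ I₁ F G,
      Nonempty (FactorWitness 𝕜 (LBddClass 𝕜 J₂) I₁ F G T))
    (E : Type u) [NormedAddCommGroup E] [NormedSpace 𝕜 E] [CompleteSpace E] :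
    -- (a) ⟹ (e)
    ((ContinuousLinearMap.id 𝕜 E ∈ @closure _ (iBddTopology 𝕜 J₁ E E) (I₂ E E)) →
      HasAP 𝕜 (boundedClass 𝕜) I₂ (iBddTopology 𝕜 J₂) E) ∧
    -- (e) ⟹ (d)
    (HasAP 𝕜 (boundedClass 𝕜) I₂ (iBddTopology 𝕜 J₂) E →
      HasAP 𝕜 I₃ I₂ (iBddTopology 𝕜 J₂) E) ∧
    -- (d) ⟹ (c)
    (HasAP 𝕜 I₃ I₂ (iBddTopology 𝕜 J₂) E → HasAP 𝕜 I₁ I₂ (iBddTopology 𝕜 J₂) E) ∧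
    -- (c) ⟺ (b)
    (HasAP 𝕜 I₁ I₂ (iBddTopology 𝕜 J₂) E ↔ HasAP 𝕜 I₁ I₂ (normTopology 𝕜) E) :=
  ⟨hasAP_boundedClass_of_id_mem_closure hI₂ hJ₁ hJ₂ hJ21,
    HasAP.mono_left fun _ _ _ _ => subset_univ _,
    HasAP.mono_left fun F _ _ _ => hI13 F E,
    hasAP_normTopology_of_hasAP_iBddTopology hI₂ hJ₂ hfact,
    hasAP_iBddTopology_of_hasAP_normTopology hJ₂⟩

/-- the implications (a) ⟹ (e) ⟹ (d) ⟹ (c) ⟺ (b) among approximation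
properties with respect to the topologies of uniform convergence on J-bounded sets. -/
theorem statement8 (I₁ I₂ I₃ J₁ J₂ : BanachOpClass 𝕜)
    (hI₁ : IsOperatorIdeal 𝕜 I₁) (hI₂ : IsOperatorIdeal 𝕜 I₂) (hI₃ : IsOperatorIdeal 𝕜 I₃)
    (hJ₁ : IsOperatorIdeal 𝕜 J₁) (hJ₂ : IsOperatorIdeal 𝕜 J₂)
    (hJ21 : ∀ (E F : Type u) [NormedAddCommGroup E] [NormedSpace 𝕜 E] [CompleteSpace E] [NormedAddCommGroup F] [NormedSpace 𝕜 F] [CompleteSpace F], J₂ E F ⊆ J₁ E F)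
    (hI13 : ∀ (E F : Type u) [NormedAddCommGroup E] [NormedSpace 𝕜 E] [CompleteSpace E] [NormedAddCommGroup F] [NormedSpace 𝕜 F] [CompleteSpace F], I₁ E F ⊆ I₃ E F)
    (hfact : ∀ (F G : Type u) [NormedAddCommGroup F] [NormedSpace 𝕜 F] [CompleteSpace F] [NormedAddCommGroup G] [NormedSpace 𝕜 G] [CompleteSpace G], ∀ T ∈ I₁ F G,
      Nonempty (FactorWitness 𝕜 (LBddClass 𝕜 J₂) I₁ F G T))
    (E : Type u) [NormedAddCommGroup E] [NormedSpace 𝕜 E] [CompleteSpace E] :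
    -- (a) ⟹ (e)
    ((ContinuousLinearMap.id 𝕜 E ∈ @closure _ (iBddTopology 𝕜 J₁ E E) (I₂ E E)) →
      HasAP 𝕜 (boundedClass 𝕜) I₂ (iBddTopology 𝕜 J₂) E) ∧
    -- (e) ⟹ (d)
    (HasAP 𝕜 (boundedClass 𝕜) I₂ (iBddTopology 𝕜 J₂) E →
      HasAP 𝕜 I₃ I₂ (iBddTopology 𝕜 J₂) E) ∧
    -- (d) ⟹ (c)
    (HasAP 𝕜 I₃ I₂ (iBddTopology 𝕜 J₂) E → HasAP 𝕜 I₁ I₂ (iBddTopology 𝕜 J₂) E) ∧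
    -- (c) ⟺ (b)
    (HasAP 𝕜 I₁ I₂ (iBddTopology 𝕜 J₂) E ↔ HasAP 𝕜 I₁ I₂ (normTopology 𝕜) E) :=
  statement8_general I₁ I₂ I₃ J₁ J₂ hI₂ hJ₁ hJ₂ hJ21 hI13 hfact E
end

section
/- Let E_1, …, E_n, F be Banach spaces and A : E_1 × ⋯ × E_n → F be a continuous n-linear mapping. The following are equivalent: (i) there exist a Banach space G, a continuous n-linear mapping B : E_1 × ⋯ × E_n → G and a finite-rank bounded linear operator u : G → F such that A = u ∘ B; (ii) A has finite rank, i.e., the linear span of the range of A is a finite-dimensional subspace of F. -/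
open Filter Topology Metric Set Pointwise

universe u

variable (𝕜 : Type u) [RCLike 𝕜]

/-- A witness that the continuous multilinear map `A` factors as `A = u ∘ B` through some
Banach space `G` with `u` a finite rank bounded linear operator. -/
structure MultFactorWitness (n : ℕ) (E : Fin n → Type u) [∀ i, NormedAddCommGroup (E i)]
    [∀ i, NormedSpace 𝕜 (E i)] [∀ i, CompleteSpace (E i)]
    (F : Type u) [NormedAddCommGroup F] [NormedSpace 𝕜 F] [CompleteSpace F] (A : ContinuousMultilinearMap 𝕜 E F) : Type (u + 1) where
  G : Type u
  [iG : NormedAddCommGroup G]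
  [iS : NormedSpace 𝕜 G]
  [iC : CompleteSpace G]
  B : ContinuousMultilinearMap 𝕜 E G
  u : G →L[𝕜] F
  hu : IsFiniteRankOp 𝕜 u
  heq : A = u.compContinuousMultilinearMap B

section MultilinearFiniteRank

variable {n : ℕ} {E : Fin n → Type u} [∀ i, NormedAddCommGroup (E i)] [∀ i, NormedSpace 𝕜 (E i)]
  {F G : Type u} [NormedAddCommGroup F] [NormedSpace 𝕜 F]
  [NormedAddCommGroup G] [NormedSpace 𝕜 G]

theorem span_range_compContinuousMultilinearMap_le_range (u : G →L[𝕜] F)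
    (B : ContinuousMultilinearMap 𝕜 E G) :
    Submodule.span 𝕜 (Set.range ⇑(u.compContinuousMultilinearMap B)) ≤
      LinearMap.range (u : G →ₗ[𝕜] F) :=
  Submodule.span_le.mpr <| by
    rintro _ ⟨x, rfl⟩
    exact ⟨B x, rfl⟩

theorem finiteDimensional_span_range_compContinuousMultilinearMap {u : G →L[𝕜] F}
    (hu : IsFiniteRankOp 𝕜 u) (B : ContinuousMultilinearMap 𝕜 E G) :
    FiniteDimensional 𝕜 (Submodule.span 𝕜 (Set.range ⇑(u.compContinuousMultilinearMap B))) :=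
  haveI : FiniteDimensional 𝕜 (LinearMap.range (u : G →ₗ[𝕜] F)) := hu
  Submodule.finiteDimensional_of_le (span_range_compContinuousMultilinearMap_le_range 𝕜 u B)

theorem isFiniteRankOp_subtypeL (p : Submodule 𝕜 F) [FiniteDimensional 𝕜 p] :
    IsFiniteRankOp 𝕜 p.subtypeL := by
  change FiniteDimensional 𝕜 (LinearMap.range p.subtype)
  rwa [Submodule.range_subtype]

/-- A finite-rank `A` factors through the inclusion of the span of its range, which is
complete because it is finite dimensional. -/
noncomputable def MultFactorWitness.ofFiniteDimensional [∀ i, CompleteSpace (E i)]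
    [CompleteSpace F] (A : ContinuousMultilinearMap 𝕜 E F)
    [FiniteDimensional 𝕜 (Submodule.span 𝕜 (Set.range ⇑A))] :
    MultFactorWitness 𝕜 n E F A where
  G := Submodule.span 𝕜 (Set.range ⇑A)
  B := A.codRestrict _ fun x => Submodule.subset_span ⟨x, rfl⟩
  u := (Submodule.span 𝕜 (Set.range ⇑A)).subtypeL
  hu := isFiniteRankOp_subtypeL 𝕜 _
  heq := rfl

end MultilinearFiniteRank

/-- a continuous multilinear map factors through a finite rank operator iff
it has finite rank, i.e. the span of its range is finite dimensional. -/
theorem statement15 (n : ℕ) (E : Fin n → Type u) [∀ i, NormedAddCommGroup (E i)]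
    [∀ i, NormedSpace 𝕜 (E i)] [∀ i, CompleteSpace (E i)]
    (F : Type u) [NormedAddCommGroup F] [NormedSpace 𝕜 F] [CompleteSpace F] (A : ContinuousMultilinearMap 𝕜 E F) :
    Nonempty (MultFactorWitness 𝕜 n E F A) ↔
      FiniteDimensional 𝕜 (Submodule.span 𝕜 (Set.range ⇑A)) := by
  refine ⟨fun ⟨W⟩ => ?_, fun _ => ⟨MultFactorWitness.ofFiniteDimensional 𝕜 A⟩⟩
  obtain ⟨G, B, u, hu, rfl⟩ := W
  exact finiteDimensional_span_range_compContinuousMultilinearMap 𝕜 hu B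
end

section
/- The function f : (1, ∞) → ℝ defined by f(a) = Σ_{n=1}^∞ aⁿ/(aⁿ+1)² is well defined (the series converges for every a > 1), continuous, and strictly decreasing; moreover f(a) → ∞ as a → 1⁺ and f(a) → 0 as a → ∞. Consequently, there exists exactly one number â ∈ (1, ∞) such that f(â) = 1. -/
open Filter Topology

/-- The Lima–Nygaard–Oja function `f(a) = Σ_{n=1}^∞ aⁿ/(aⁿ+1)²`. -/
noncomputable def lnoF (a : ℝ) : ℝ := ∑' n : ℕ, a ^ (n + 1) / (a ^ (n + 1) + 1) ^ 2

lemma term_anti {x y : ℝ} (hx : 1 ≤ x) (hxy : x < y) :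
    y / (y + 1) ^ 2 < x / (x + 1) ^ 2 := by
  have hy : (0:ℝ) < y + 1 := by linarith
  rw [div_lt_div_iff₀ (by positivity) (by positivity)]
  nlinarith [mul_pos (sub_pos.2 hxy) (show (0:ℝ) < x*y - 1 by nlinarith)]

lemma term_nonneg {a : ℝ} (ha : 1 < a) (n : ℕ) :
    0 ≤ a ^ (n + 1) / (a ^ (n + 1) + 1) ^ 2 := by
  have : (0:ℝ) < a := by linarith
  positivity

lemma geom_shift {a : ℝ} (ha : 1 < a) : Summable fun n : ℕ => a⁻¹ ^ (n + 1) := by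
  have ha0 : (0:ℝ) < a := by linarith
  have := (summable_geometric_of_lt_one (by positivity)
      (inv_lt_one_of_one_lt₀ ha)).mul_left a⁻¹
  exact this.congr (fun n => by ring)

lemma term_le {a : ℝ} (ha : 1 < a) (n : ℕ) :
    a ^ (n + 1) / (a ^ (n + 1) + 1) ^ 2 ≤ a⁻¹ ^ (n + 1) := by
  have ha0 : (0:ℝ) < a := by linarith
  have hp : (0:ℝ) < a ^ (n+1) := by positivity
  rw [inv_pow, ← one_div, div_le_div_iff₀ (by positivity) hp]
  nlinarith [sq_nonneg (a ^ (n+1))]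

lemma sum_lno {a : ℝ} (ha : 1 < a) :
    Summable fun n : ℕ => a ^ (n + 1) / (a ^ (n + 1) + 1) ^ 2 :=
  Summable.of_nonneg_of_le (term_nonneg ha) (term_le ha) (geom_shift ha)

lemma lno_anti : StrictAntiOn lnoF (Set.Ioi 1) := by
  intro a ha b hb hab
  simp only [Set.mem_Ioi] at ha hb
  have key : ∀ n : ℕ, b ^ (n+1) / (b ^ (n+1) + 1) ^ 2 < a ^ (n+1) / (a ^ (n+1) + 1) ^ 2 := by
    intro n
    exact term_anti (one_le_pow₀ ha.le) (pow_lt_pow_left₀ hab (by linarith) (by omega))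
  exact Summable.tsum_lt_tsum (fun n => (key n).le) (key 0) (sum_lno hb) (sum_lno ha)

lemma lno_cont : ContinuousOn lnoF (Set.Ioi 1) := by
  intro a ha
  simp only [Set.mem_Ioi] at ha
  set b := (1 + a) / 2 with hbdef
  have hb : 1 < b := by simp [hbdef]; linarith
  have hba : b < a := by simp [hbdef]; linarith
  have hcont : ContinuousOn lnoF (Set.Ioi b) := by
    apply continuousOn_tsum (u := fun n : ℕ => b ^ (n + 1) / (b ^ (n + 1) + 1) ^ 2)
    · intro n
      apply ContinuousOn.div (by fun_prop) (by fun_prop)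
      intro x hx
      simp only [Set.mem_Ioi] at hx
      have : (0:ℝ) < x := by linarith
      positivity
    · exact sum_lno hb
    · intro n x hx
      simp only [Set.mem_Ioi] at hx
      have hx1 : 1 < x := lt_trans hb hx
      rw [Real.norm_eq_abs, abs_of_nonneg (term_nonneg hx1 n)]
      rcases eq_or_lt_of_le (le_of_lt hx) with h | h
      · exact le_of_eq (by rw [← h])
      · exact (term_anti (one_le_pow₀ hb.le) (pow_lt_pow_left₀ h (by linarith) (by omega))).le
  exact ((hcont.continuousAt (isOpen_Ioi.mem_nhds hba)).continuousWithinAt)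

lemma lno_le {a : ℝ} (ha : 1 < a) : lnoF a ≤ (a - 1)⁻¹ := by
  have ha0 : (0:ℝ) < a := by linarith
  have h1 : lnoF a ≤ ∑' n : ℕ, a⁻¹ ^ (n + 1) :=
    Summable.tsum_le_tsum (term_le ha) (sum_lno ha) (geom_shift ha)
  have h2 : ∑' n : ℕ, a⁻¹ ^ (n + 1) = (a - 1)⁻¹ := by
    have : ∀ n : ℕ, a⁻¹ ^ (n+1) = a⁻¹ * a⁻¹ ^ n := fun n => by ring
    rw [tsum_congr this, tsum_mul_left, tsum_geometric_of_lt_one (by positivity)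
      (inv_lt_one_of_one_lt₀ ha)]
    rw [← mul_inv, eq_comm, inv_eq_iff_eq_inv, inv_inv]
    field_simp
  linarith

lemma lno_nonneg {a : ℝ} (ha : 1 < a) : 0 ≤ lnoF a :=
  tsum_nonneg (term_nonneg ha)

lemma lno_to_zero : Tendsto lnoF atTop (nhds 0) := by
  have h1 : Tendsto (fun a : ℝ => (a - 1)⁻¹) atTop (nhds 0) :=
    tendsto_inv_atTop_zero.comp (tendsto_atTop_add_const_right _ _ tendsto_id)
  refine tendsto_of_tendsto_of_tendsto_of_le_of_le' tendsto_const_nhds h1 ?_ ?_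
  · filter_upwards [eventually_gt_atTop (1:ℝ)] with a ha using lno_nonneg ha
  · filter_upwards [eventually_gt_atTop (1:ℝ)] with a ha using lno_le ha

lemma lno_to_top : Tendsto lnoF (nhdsWithin 1 (Set.Ioi 1)) atTop := by
  rw [tendsto_atTop]
  intro M
  obtain ⟨N, hN⟩ := exists_nat_ge (9 / 2 * M)
  set N' := N + 1
  set c : ℝ := (2:ℝ) ^ ((N' : ℝ)⁻¹) with hc
  have hN'pos : (0:ℝ) < N' := by positivity
  have hc1 : 1 < c := Real.one_lt_rpow_iff_of_pos (by norm_num) |>.2 (Or.inl ⟨by norm_num, by positivity⟩)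
  filter_upwards [Ioo_mem_nhdsGT_of_mem (Set.mem_Ico.2 ⟨le_refl 1, hc1⟩)] with a ha
  obtain ⟨ha1, hac⟩ := ha
  have key : ∀ n ∈ Finset.range N', (2/9 : ℝ) ≤ a ^ (n + 1) / (a ^ (n + 1) + 1) ^ 2 := by
    intro n hn
    simp only [Finset.mem_range] at hn
    have hx1 : 1 < a ^ (n+1) := one_lt_pow₀ ha1 (by omega)
    have hx2 : a ^ (n+1) ≤ 2 := by
      have h1 : a ^ (n+1) ≤ c ^ (n+1) := pow_le_pow_left₀ (by linarith) hac.le _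
      have h2 : c ^ (n+1) = (2:ℝ) ^ ((n+1 : ℕ) * (N' : ℝ)⁻¹) := by
        rw [hc, ← Real.rpow_natCast ((2:ℝ) ^ ((N':ℝ)⁻¹)) (n+1), ← Real.rpow_mul (by norm_num)]
        ring_nf
      have h3 : ((n+1:ℕ) : ℝ) * (N' : ℝ)⁻¹ ≤ 1 := by
        rw [← div_eq_mul_inv, div_le_one hN'pos]
        exact_mod_cast Nat.succ_le_of_lt hn
      calc a ^ (n+1) ≤ (2:ℝ) ^ ((n+1:ℕ) * (N' : ℝ)⁻¹) := h2 ▸ h1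
        _ ≤ (2:ℝ) ^ (1:ℝ) := Real.rpow_le_rpow_of_exponent_le (by norm_num) h3
        _ = 2 := Real.rpow_one 2
    rw [div_le_div_iff₀ (by norm_num) (by positivity)]
    nlinarith
  have hsum : ∑ n ∈ Finset.range N', a ^ (n + 1) / (a ^ (n + 1) + 1) ^ 2 ≤ lnoF a :=
    Summable.sum_le_tsum _ (fun n _ => term_nonneg ha1 n) (sum_lno ha1)
  have hlow : (N' : ℝ) * (2/9) ≤ ∑ n ∈ Finset.range N', a ^ (n + 1) / (a ^ (n + 1) + 1) ^ 2 := by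
    calc (N' : ℝ) * (2/9) = ∑ _n ∈ Finset.range N', (2/9 : ℝ) := by
          rw [Finset.sum_const, Finset.card_range, nsmul_eq_mul]
      _ ≤ _ := Finset.sum_le_sum key
  have : M ≤ (N' : ℝ) * (2/9) := by
    have : (N : ℝ) ≤ (N' : ℝ) := by exact_mod_cast Nat.le_succ N
    nlinarith
  linarith

lemma lno_exists_unique : ∃! a : ℝ, a ∈ Set.Ioi (1 : ℝ) ∧ lnoF a = 1 := by
  -- point with large value
  obtain ⟨a₁, ha₁M, ha₁⟩ : ∃ a₁, 2 ≤ lnoF a₁ ∧ a₁ ∈ Set.Ioi (1:ℝ) := by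
    have h1 : ∀ᶠ a in nhdsWithin 1 (Set.Ioi (1:ℝ)), 2 ≤ lnoF a := lno_to_top.eventually_ge_atTop 2
    exact (h1.and self_mem_nhdsWithin).exists
  -- point beyond a₁ with small value
  obtain ⟨a₂, ha₂s, ha₂gt⟩ : ∃ a₂, lnoF a₂ < 1 ∧ a₁ < a₂ := by
    have h2 : ∀ᶠ a in atTop, lnoF a < 1 := by
      have := lno_to_zero.eventually (eventually_lt_nhds (show (0:ℝ) < 1 by norm_num))
      exact this
    exact (h2.and (eventually_gt_atTop a₁)).exists
  have ha₁1 : (1:ℝ) < a₁ := ha₁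
  have ha₂1 : (1:ℝ) < a₂ := lt_trans ha₁1 ha₂gt
  have hsub : Set.Icc a₁ a₂ ⊆ Set.Ioi 1 := fun x hx => lt_of_lt_of_le ha₁1 hx.1
  have hivt := intermediate_value_Icc' (le_of_lt ha₂gt) (lno_cont.mono hsub)
  have h1mem : (1:ℝ) ∈ Set.Icc (lnoF a₂) (lnoF a₁) := ⟨ha₂s.le, by linarith⟩
  obtain ⟨x, hx, hfx⟩ := hivt h1mem
  refine ⟨x, ⟨hsub hx, hfx⟩, ?_⟩
  intro y ⟨hy, hfy⟩
  exact lno_anti.injOn hy (hsub hx) (by rw [hfy, hfx])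

/-- the function `f(a) = Σ_{n=1}^∞ aⁿ/(aⁿ+1)²` is well defined on `(1, ∞)`,
continuous and strictly decreasing there, tends to `∞` as `a → 1⁺` and to `0` as `a → ∞`;
consequently there is exactly one `â ∈ (1, ∞)` with `f(â) = 1`. -/
theorem statement16 :
    (∀ a : ℝ, 1 < a → Summable fun n : ℕ => a ^ (n + 1) / (a ^ (n + 1) + 1) ^ 2) ∧
    ContinuousOn lnoF (Set.Ioi 1) ∧
    StrictAntiOn lnoF (Set.Ioi 1) ∧
    Tendsto lnoF (nhdsWithin 1 (Set.Ioi 1)) atTop ∧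
    Tendsto lnoF atTop (nhds 0) ∧
    (∃! a : ℝ, a ∈ Set.Ioi (1 : ℝ) ∧ lnoF a = 1) := by
  exact ⟨fun a ha => sum_lno ha, lno_cont, lno_anti, lno_to_top, lno_to_zero, lno_exists_unique⟩
end
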